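/- Fix n ≥ 2 and parameters ε = (ε_{ji})_{1 ≤ j < i ≤ n−1} with each ε_{ji} ∈ {0, 1/2}. For any indices 1 ≤ i_1 < i_2 < ⋯ < i_k ≤ n−1 (with 1 ≤ k ≤ n−1) and any λ ∈ ℤ^n, the affine isometry γ := (C_{i_1}L_{c_{i_1}}) ∘ ⋯ ∘ (C_{i_k}L_{c_{i_k}}) ∘ L_λ of ℝ^n satisfies: for every x ∈ ℝ^n, the (i_k+1)-th coordinate of γ(x) equals x_{i_k+1} + 1/2 + λ_{i_k+1}. Consequently γ^m ≠ id for every integer m ≠ 0, i.e., γ has infinite order. -/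
import Mathlib


/-- The diagonal matrix `C_i = diag(1,…,1,−1,1,…,1)` with `−1` in the `i`-th place
(indices numbered from `0`). -/
def Cmat (n i : ℕ) : Matrix (Fin n) (Fin n) ℝ :=
  Matrix.diagonal (fun a => if (a : ℕ) = i then -1 else 1)

/-- The translation vector `c_i = (1/2) e_{i+1} + ∑_{j<i} ε_{ji} e_j`
(indices numbered from `0`). -/
noncomputable def cvec (n : ℕ) (ε : ℕ → ℕ → ℝ) (i : ℕ) : Fin n → ℝ :=
  fun m => if (m : ℕ) = i + 1 then 1 / 2 else if (m : ℕ) < i then ε m i else 0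

/-- The affine map `C_i L_{c_i} : x ↦ C_i x + c_i` as a function on `ℝ^n`. -/
noncomputable def gammaFun (n : ℕ) (ε : ℕ → ℕ → ℝ) (i : ℕ) : (Fin n → ℝ) → (Fin n → ℝ) :=
  fun x => (Cmat n i).mulVec x + cvec n ε i

lemma foldr_coord {n : ℕ} (t : Fin n)
    (l : List ((((Fin n → ℝ) → (Fin n → ℝ))) × ℝ))
    (hl : ∀ p ∈ l, ∀ y : Fin n → ℝ, p.1 y t = y t + p.2) :
    ∀ (b : (Fin n → ℝ) → (Fin n → ℝ)) (x : Fin n → ℝ),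
      ((l.map Prod.fst).foldr (· ∘ ·) b) x t = b x t + (l.map Prod.snd).sum := by
  induction l with
  | nil => simp
  | cons p l ih =>
    intro b x
    simp only [List.map_cons, List.foldr_cons, Function.comp_apply, List.sum_cons]
    rw [hl p (by simp), ih (fun q hq => hl q (List.mem_cons_of_mem _ hq)) b x]
    ring

/-- Given strictly increasing indices `i₁ < ⋯ < i_k ≤ n−2` (numbered from `0`, so that paper
index `i_k + 1` is coordinate `s(k-1) + 1` here) and `λ ∈ ℤ^n`, the affine isometry
`γ = (C_{i₁} L_{c_{i₁}}) ∘ ⋯ ∘ (C_{i_k} L_{c_{i_k}}) ∘ L_λ` adds `1/2 + λ_{i_k+1}` to the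
`(i_k+1)`-th coordinate; consequently `γ` has infinite order. -/
theorem gamma_comp_coord_and_infinite_order (n : ℕ) (hn : 2 ≤ n) (ε : ℕ → ℕ → ℝ)
    (hε : ∀ j i, j < i → i < n - 1 → ε j i = 0 ∨ ε j i = 1 / 2)
    (k : ℕ) (hk1 : 1 ≤ k) (hk2 : k ≤ n - 1)
    (s : Fin k → ℕ) (hmono : StrictMono s) (hlt : ∀ m, s m < n - 1)
    (lam : Fin n → ℤ) :
    (∀ x : Fin n → ℝ, ∀ idx : Fin n, (idx : ℕ) = s ⟨k - 1, by omega⟩ + 1 →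
      (List.ofFn (fun m : Fin k => gammaFun n ε (s m))).foldr (· ∘ ·)
          (fun x => fun m => x m + (lam m : ℝ)) x idx
        = x idx + 1 / 2 + (lam idx : ℝ)) ∧
    (∀ m : ℕ, 0 < m →
      ((List.ofFn (fun m : Fin k => gammaFun n ε (s m))).foldr (· ∘ ·)
          (fun x => fun m => x m + (lam m : ℝ)))^[m] ≠ id) := by
  have hK : k - 1 < k := by omega
  set K : Fin k := ⟨k - 1, hK⟩ with hKdef
  -- coordinate behaviour of each gammaFun
  have hcoord : ∀ (m : Fin k) (idx : Fin n), (idx : ℕ) = s K + 1 →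
      ∀ y : Fin n → ℝ, gammaFun n ε (s m) y idx
        = y idx + (if m = K then (1/2 : ℝ) else 0) := by
    intro m idx hidx y
    have hle : s m ≤ s K := hmono.monotone (by
      show m ≤ K
      exact Fin.mk_le_mk.mpr (by omega) |>.trans_eq rfl)
    have h1 : (idx : ℕ) ≠ s m := by omega
    have h2 : ¬ (idx : ℕ) < s m := by omega
    have hmv : (Cmat n (s m)).mulVec y idx = y idx := by
      unfold Cmat
      rw [Matrix.mulVec_diagonal, if_neg h1, one_mul]
    have hcv : cvec n ε (s m) idx = if m = K then (1/2 : ℝ) else 0 := by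
      unfold cvec
      rcases eq_or_ne m K with hm | hm
      · subst hm; rw [if_pos hidx, if_pos rfl]
      · rw [if_neg, if_neg h2, if_neg hm]
        intro h
        exact hm (hmono.injective (by omega))
    show (Cmat n (s m)).mulVec y idx + cvec n ε (s m) idx = _
    rw [hmv, hcv]
  have hfold : ∀ (x : Fin n → ℝ) (idx : Fin n), (idx : ℕ) = s K + 1 →
      (List.ofFn (fun m : Fin k => gammaFun n ε (s m))).foldr (· ∘ ·)
          (fun x => fun m => x m + (lam m : ℝ)) x idx
        = x idx + 1 / 2 + (lam idx : ℝ) := by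
    intro x idx hidx
    have hmem : ∀ p ∈ List.ofFn (fun m : Fin k =>
        (gammaFun n ε (s m), if m = K then (1/2 : ℝ) else 0)),
        ∀ y : Fin n → ℝ, p.1 y idx = y idx + p.2 := by
      intro p hp y
      rw [List.mem_ofFn] at hp
      obtain ⟨m, hm⟩ := hp
      subst hm
      exact hcoord m idx hidx y
    have := foldr_coord idx _ hmem (fun x m => x m + (lam m : ℝ)) x
    rw [List.map_ofFn, List.map_ofFn] at this
    have hsum : (List.ofFn ((Prod.snd) ∘ (fun m : Fin k =>
        (gammaFun n ε (s m), if m = K then (1/2 : ℝ) else 0)))).sum = 1/2 := by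
      rw [List.sum_ofFn]
      simp [Finset.sum_ite_eq']
    rw [hsum] at this
    have heq : (List.ofFn ((Prod.fst) ∘ (fun m : Fin k =>
        (gammaFun n ε (s m), if m = K then (1/2 : ℝ) else 0))))
        = List.ofFn (fun m : Fin k => gammaFun n ε (s m)) := rfl
    rw [heq] at this
    rw [this]; ring
  refine ⟨fun x idx hidx => hfold x idx hidx, ?_⟩
  intro m hm hid
  have ht : s K + 1 < n := by have := hlt K; omega
  set t : Fin n := ⟨s K + 1, ht⟩ with htdef
  set F : (Fin n → ℝ) → (Fin n → ℝ) := (List.ofFn (fun m : Fin k => gammaFun n ε (s m))).foldr (· ∘ ·)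
      (fun x => fun m => x m + (lam m : ℝ)) with hF
  have hstep : ∀ y : Fin n → ℝ, F y t = y t + (1/2 + (lam t : ℝ)) := by
    intro y
    have := hfold y t rfl
    rw [this]; ring
  have hiter : ∀ (j : ℕ) (x : Fin n → ℝ), F^[j] x t = x t + j * (1/2 + (lam t : ℝ)) := by
    intro j
    induction j with
    | zero => intro x; simp
    | succ j ih =>
      intro x
      rw [Function.iterate_succ_apply', hstep, ih]
      push_cast
      ring
  have h0 := hiter m (fun _ => 0)
  rw [hid] at h0
  simp only [id_eq] at h0
  have hc : (m : ℝ) * (1/2 + (lam t : ℝ)) = 0 := by linarith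
  have hml : (1/2 + (lam t : ℝ)) = 0 := by
    rcases mul_eq_zero.mp hc with h | h
    · exact absurd h (by positivity)
    · exact h
  have : (2 * lam t : ℤ) = -1 := by
    have : (lam t : ℝ) = -(1/2) := by linarith
    have h2 : ((2 * lam t : ℤ) : ℝ) = (-1 : ℤ) := by push_cast; rw [this]; ring
    exact_mod_cast h2
  omega
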